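/- For the binary symmetric output quantizer f(x,z) = sgn(x+z), the quantity Δ = (E[x·sgn(x+z)])² / (E_s · E[sgn(x+z)²]) equals 2·E_s/(π·(E_s + σ²)); consequently the effective SNR Δ/(1 − Δ) equals 2·E_s/((π − 2)·E_s + π·σ²). -/

import Mathlib

/-!
For the `N(0, v)` density `φ` one has `x φ(x) = -v φ'(x)`, so integrating by parts on the two
half-lines cut at `-z` gives `E_x[x sgn(x + z)] = 2 v φ(z)`: Stein's identity, with the jump
`2δ_{-z}` of `sgn(· + z)` as derivative. Averaging over `z ~ N(0, σ²)` is a Gaussian integral,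
`E_z[φ_v(z)] = φ_{v+σ²}(0) = (2π(v + σ²))^{-1/2}`. Since `x + z ~ N(0, E_s + σ²)` has no atom,
`sgn(x + z)² = 1` almost surely. Hence `Δ = (2E_s)² / (2π(E_s + σ²) E_s)`, and for `Δ = a / b` the
effective SNR is `Δ / (1 - Δ) = a / (b - a)`.
-/

open MeasureTheory ProbabilityTheory Real Filter Set
open scoped Topology NNReal

lemma Real.measurable_sign : Measurable Real.sign :=
  Measurable.ite measurableSet_Iio measurable_const
    (Measurable.ite measurableSet_Ioi measurable_const measurable_const)

lemma Real.norm_sign_le_one (r : ℝ) : ‖Real.sign r‖ ≤ 1 := by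
  rcases Real.sign_apply_eq r with h | h | h <;> simp [h]

lemma div_div_one_sub_div {K : Type*} [Field K] (a : K) {b : K} (hb : b ≠ 0) :
    a / b / (1 - a / b) = a / (b - a) := by
  rw [one_sub_div hb, div_div_div_cancel_right₀ hb]

lemma integral_sign_sq {μ : Measure ℝ} [IsProbabilityMeasure μ] (h0 : μ {0} = 0) :
    ∫ x, Real.sign x ^ 2 ∂μ = 1 := by
  have h : (fun x => Real.sign x ^ 2) =ᵐ[μ] fun _ => 1 := by
    filter_upwards [measure_eq_zero_iff_ae_notMem.mp h0] with x hx
    rcases Real.sign_apply_eq_of_ne_zero x (by simpa using hx) with h | h <;> simp [h]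
  simp [integral_congr_ae h]

namespace ProbabilityTheory

lemma hasDerivAt_gaussianPDFReal (μ : ℝ) (v : ℝ≥0) (x : ℝ) :
    HasDerivAt (gaussianPDFReal μ v) (-(x - μ) / v * gaussianPDFReal μ v x) x := by
  have h := ((((hasDerivAt_id' x).sub_const μ).fun_pow 2).fun_neg.div_const
    (2 * (v : ℝ))).exp.const_mul (√(2 * π * v))⁻¹
  refine h.congr_deriv ?_
  simp only [gaussianPDFReal_def]
  ring

lemma tendsto_gaussianPDFReal_cocompact (μ : ℝ) {v : ℝ≥0} (hv : v ≠ 0) :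
    Tendsto (gaussianPDFReal μ v) (cocompact ℝ) (𝓝 0) := by
  have hdist : Tendsto (fun x : ℝ => |x - μ|) (cocompact ℝ) atTop :=
    tendsto_atTop_mono (fun x => by simpa using abs_sub_abs_le_abs_sub x μ)
      (tendsto_atTop_add_const_right _ (-|μ|) tendsto_norm_cocompact_atTop)
  have hexponent : Tendsto (fun x : ℝ => -(x - μ) ^ 2 / (2 * v)) (cocompact ℝ) atBot := by
    have := ((tendsto_pow_atTop two_ne_zero).comp hdist).atTop_div_const
      (by positivity : (0 : ℝ) < 2 * v)
    simpa [neg_div] using this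
  have h := (tendsto_exp_atBot.comp hexponent).const_mul (√(2 * π * v))⁻¹
  rw [mul_zero] at h
  exact h

lemma gaussianPDFReal_neg (μ : ℝ) (v : ℝ≥0) (x : ℝ) :
    gaussianPDFReal μ v (-x) = gaussianPDFReal (-μ) v x := by
  simp only [gaussianPDFReal_def]
  ring_nf

lemma gaussianPDFReal_self (μ : ℝ) (v : ℝ≥0) :
    gaussianPDFReal μ v μ = (√(2 * π * v))⁻¹ := by
  simp [gaussianPDFReal_def]

lemma sq_gaussianPDFReal_self (μ : ℝ) (v : ℝ≥0) :
    gaussianPDFReal μ v μ ^ 2 = (2 * π * v)⁻¹ := by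
  rw [gaussianPDFReal_self, inv_pow, sq_sqrt (by positivity)]

lemma integrable_mul_gaussianPDFReal {v : ℝ≥0} (hv : v ≠ 0) :
    Integrable (fun x => x * gaussianPDFReal 0 v x) := by
  have h := (integrable_mul_exp_neg_mul_sq (b := (2 * v : ℝ)⁻¹) (by positivity)).const_mul
    (√(2 * π * v))⁻¹
  refine h.congr (ae_of_all _ fun x => ?_)
  simp only [gaussianPDFReal_def]
  ring_nf

lemma hasDerivAt_neg_mul_gaussianPDFReal {v : ℝ≥0} (hv : v ≠ 0) (x : ℝ) :
    HasDerivAt (fun y => -(v * gaussianPDFReal 0 v y)) (x * gaussianPDFReal 0 v x) x := by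
  refine ((hasDerivAt_gaussianPDFReal 0 v x).const_mul (v : ℝ)).neg.congr_deriv ?_
  field_simp
  ring

lemma integral_Ioi_mul_gaussianPDFReal {v : ℝ≥0} (hv : v ≠ 0) (a : ℝ) :
    ∫ x in Ioi a, x * gaussianPDFReal 0 v x = v * gaussianPDFReal 0 v a := by
  have hlim := ((tendsto_gaussianPDFReal_cocompact 0 hv).mono_left atTop_le_cocompact).const_mul
    (v : ℝ)
  rw [integral_Ioi_of_hasDerivAt_of_tendsto' (fun x _ => hasDerivAt_neg_mul_gaussianPDFReal hv x)
    (integrable_mul_gaussianPDFReal hv).integrableOn (by simpa using hlim.neg)]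
  ring

lemma integral_Iic_mul_gaussianPDFReal {v : ℝ≥0} (hv : v ≠ 0) (a : ℝ) :
    ∫ x in Iic a, x * gaussianPDFReal 0 v x = -(v * gaussianPDFReal 0 v a) := by
  have hlim := ((tendsto_gaussianPDFReal_cocompact 0 hv).mono_left atBot_le_cocompact).const_mul
    (v : ℝ)
  rw [integral_Iic_of_hasDerivAt_of_tendsto
    (hasDerivAt_neg_mul_gaussianPDFReal hv a).continuousAt.continuousWithinAt
    (fun x _ => hasDerivAt_neg_mul_gaussianPDFReal hv x)
    (integrable_mul_gaussianPDFReal hv).integrableOn (by simpa using hlim.neg)]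
  ring

lemma integral_mul_sign_add_gaussianReal {v : ℝ≥0} (hv : v ≠ 0) (z : ℝ) :
    ∫ x, x * Real.sign (x + z) ∂gaussianReal 0 v = 2 * v * gaussianPDFReal 0 v z := by
  have hint : Integrable (fun x => x * gaussianPDFReal 0 v x * Real.sign (x + z)) :=
    (integrable_mul_gaussianPDFReal hv).mul_bdd
      (Real.measurable_sign.comp (measurable_add_const z)).aestronglyMeasurable
      (ae_of_all _ fun x => Real.norm_sign_le_one _)
  have h_left : EqOn (fun x => x * gaussianPDFReal 0 v x * Real.sign (x + z))
      (fun x => -(x * gaussianPDFReal 0 v x)) (Iio (-z)) :=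
    fun x (hx : x < -z) => by simp [Real.sign_of_neg (by linarith : x + z < 0)]
  have h_right : EqOn (fun x => x * gaussianPDFReal 0 v x * Real.sign (x + z))
      (fun x => x * gaussianPDFReal 0 v x) (Ioi (-z)) :=
    fun x (hx : -z < x) => by simp [Real.sign_of_pos (by linarith : 0 < x + z)]
  calc ∫ x, x * Real.sign (x + z) ∂gaussianReal 0 v
      = ∫ x, x * gaussianPDFReal 0 v x * Real.sign (x + z) := by
        rw [integral_gaussianReal_eq_integral_smul hv]
        exact integral_congr_ae (ae_of_all _ fun x => by simp only [smul_eq_mul]; ring)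
    _ = -(∫ x in Iic (-z), x * gaussianPDFReal 0 v x)
          + ∫ x in Ioi (-z), x * gaussianPDFReal 0 v x := by
        rw [← intervalIntegral.integral_Iic_add_Ioi hint.integrableOn hint.integrableOn,
          integral_Iic_eq_integral_Iio, integral_Iic_eq_integral_Iio,
          setIntegral_congr_fun measurableSet_Iio h_left,
          setIntegral_congr_fun measurableSet_Ioi h_right, integral_neg]
    _ = 2 * v * gaussianPDFReal 0 v z := by
        rw [integral_Iic_mul_gaussianPDFReal hv, integral_Ioi_mul_gaussianPDFReal hv,
          gaussianPDFReal_neg, neg_zero]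
        ring

lemma integral_gaussianPDFReal_gaussianReal {v w : ℝ≥0} (hv : v ≠ 0) (hw : w ≠ 0) :
    ∫ z, gaussianPDFReal 0 v z ∂gaussianReal 0 w = gaussianPDFReal 0 (v + w) 0 := by
  have hprod : ∀ z, gaussianPDFReal 0 w z • gaussianPDFReal 0 v z = (√(2 * π * w))⁻¹ *
      (√(2 * π * v))⁻¹ * rexp (-(((2 : ℝ) * w)⁻¹ + ((2 : ℝ) * v)⁻¹) * z ^ 2) := by
    intro z
    simp only [gaussianPDFReal_def, smul_eq_mul, sub_zero]
    rw [show -(((2 : ℝ) * w)⁻¹ + ((2 : ℝ) * v)⁻¹) * z ^ 2 = -z ^ 2 / (2 * w) + -z ^ 2 / (2 * v)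
      by ring, exp_add]
    ring
  rw [integral_gaussianReal_eq_integral_smul hw, integral_congr_ae (ae_of_all _ hprod),
    integral_const_mul, integral_gaussian, gaussianPDFReal_self, NNReal.coe_add, ← sqrt_inv,
    ← sqrt_inv, ← sqrt_inv, ← sqrt_mul (by positivity), ← sqrt_mul (by positivity)]
  congr 1
  field_simp

lemma integral_fst_mul_sign_add_gaussianReal_prod {v w : ℝ≥0} (hv : v ≠ 0) (hw : w ≠ 0) :
    ∫ p, p.1 * Real.sign (p.1 + p.2) ∂(gaussianReal 0 v).prod (gaussianReal 0 w)
      = 2 * v * gaussianPDFReal 0 (v + w) 0 := by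
  have hint : Integrable (fun p : ℝ × ℝ => p.1 * Real.sign (p.1 + p.2))
      ((gaussianReal 0 v).prod (gaussianReal 0 w)) :=
    (((memLp_id_gaussianReal 1).integrable le_rfl).comp_fst _).mul_bdd
      (Real.measurable_sign.comp measurable_add).aestronglyMeasurable
      (ae_of_all _ fun p => Real.norm_sign_le_one _)
  simp_rw [integral_prod_symm _ hint, integral_mul_sign_add_gaussianReal hv]
  rw [integral_const_mul, integral_gaussianPDFReal_gaussianReal hv hw]

lemma integral_comp_add_gaussianReal_prod {E : Type*} [NormedAddCommGroup E] [NormedSpace ℝ E]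
    {m₁ m₂ : ℝ} {v₁ v₂ : ℝ≥0} {g : ℝ → E}
    (hg : AEStronglyMeasurable g (gaussianReal (m₁ + m₂) (v₁ + v₂))) :
    ∫ p, g (p.1 + p.2) ∂(gaussianReal m₁ v₁).prod (gaussianReal m₂ v₂)
      = ∫ x, g x ∂gaussianReal (m₁ + m₂) (v₁ + v₂) := by
  rw [← gaussianReal_conv_gaussianReal] at hg ⊢
  exact (integral_map (by fun_prop) hg).symm

end ProbabilityTheory

theorem stmt_5 (Es σ2 : NNReal) (hEs : 0 < Es) (hσ2 : 0 < σ2)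
    (μ : Measure (ℝ × ℝ)) (hμ : μ = (gaussianReal 0 Es).prod (gaussianReal 0 σ2))
    (Δ : ℝ)
    (hΔdef : Δ = (∫ p : ℝ × ℝ, p.1 * Real.sign (p.1 + p.2) ∂μ) ^ 2
        / ((Es : ℝ) * ∫ p : ℝ × ℝ, (Real.sign (p.1 + p.2)) ^ 2 ∂μ)) :
    Δ = 2 * (Es : ℝ) / (Real.pi * ((Es : ℝ) + (σ2 : ℝ))) ∧
    Δ / (1 - Δ) = 2 * (Es : ℝ) / ((Real.pi - 2) * (Es : ℝ) + Real.pi * (σ2 : ℝ)) := by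
  subst hμ
  have h_sign_sq : ∫ p : ℝ × ℝ, Real.sign (p.1 + p.2) ^ 2
      ∂(gaussianReal 0 Es).prod (gaussianReal 0 σ2) = 1 := by
    rw [integral_comp_add_gaussianReal_prod (Real.measurable_sign.pow_const 2).aestronglyMeasurable,
      zero_add]
    exact integral_sign_sq
      (gaussianReal_absolutelyContinuous 0 (by positivity) (measure_singleton 0))
  have hΔ : Δ = 2 * Es / (π * (Es + σ2)) := by
    rw [hΔdef, h_sign_sq, integral_fst_mul_sign_add_gaussianReal_prod hEs.ne' hσ2.ne', mul_pow,
      sq_gaussianPDFReal_self, NNReal.coe_add]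
    field_simp
  refine ⟨hΔ, ?_⟩
  rw [hΔ, div_div_one_sub_div _ (by positivity)]
  ring
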